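/- arXiv:1501.03675 — 7 statements merged into one kernel-verified Lean document; each statement's English description precedes it below -/
import Mathlib

section
/- For a Hom-Lie-Yamaguti algebra (L, [·,·], {·,·,·}, α) and any 1-Hom-cochain f, the composition δ_I² ∘ δ¹ vanishes: {α(x)α(y)δ_I¹f(z,u)} − δ_I¹f({xyz}, α²(u)) − δ_I¹f(α²(z), {xyu}) + δ_{II}¹f(α(x),α(y),[zu]) − [α²(z) δ_{II}¹f(x,y,u)] − [δ_{II}¹f(x,y,z) α²(u)] = 0 for all x,y,z,u ∈ L. -/
/-- A Hom-Lie-Yamaguti algebra over a field `K`. -/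
structure HLY (K L : Type*) [Field K] [AddCommGroup L] [Module K L] where
  br : L →ₗ[K] L →ₗ[K] L
  tr : L →ₗ[K] L →ₗ[K] L →ₗ[K] L
  a : L →ₗ[K] L
  a_br : ∀ x y, a (br x y) = br (a x) (a y)
  a_tr : ∀ x y z, a (tr x y z) = tr (a x) (a y) (a z)
  br_alt : ∀ x, br x x = 0
  tr_alt : ∀ x y, tr x x y = 0
  ax5 : ∀ x y z,
    (br (br x y) (a z) + tr x y z) + (br (br y z) (a x) + tr y z x) +
      (br (br z x) (a y) + tr z x y) = 0
  ax6 : ∀ x y z u,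
    tr (br x y) (a z) (a u) + tr (br y z) (a x) (a u) + tr (br z x) (a y) (a u) = 0
  ax7 : ∀ x y u v,
    tr (a x) (a y) (br u v) = br (tr x y u) (a (a v)) + br (a (a u)) (tr x y v)
  ax8 : ∀ u v x y z,
    tr (a (a u)) (a (a v)) (tr x y z) =
      tr (tr u v x) (a (a y)) (a (a z)) + tr (a (a x)) (tr u v y) (a (a z)) +
        tr (a (a x)) (a (a y)) (tr u v z)

variable {K L : Type*} [Field K] [AddCommGroup L] [Module K L]

/-- First coboundary, binary part: `δ_I¹f(x,y) = [x f(y)] + [f(x) y] − f([xy])`. -/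
def d1I (H : HLY K L) (f : L →ₗ[K] L) (x y : L) : L :=
  H.br x (f y) + H.br (f x) y - f (H.br x y)

/-- First coboundary, ternary part:
`δ_{II}¹f(x,y,z) = {f(x)yz} + {x f(y) z} + {xy f(z)} − f({xyz})`. -/
def d1II (H : HLY K L) (f : L →ₗ[K] L) (x y z : L) : L :=
  H.tr (f x) y z + H.tr x (f y) z + H.tr x y (f z) - f (H.tr x y z)

/-- Second coboundary `δ_I²` (depends on a pair `(f,g)`). -/
def d2I (H : HLY K L) (f : L → L → L) (g : L → L → L → L) (x y z u : L) : L :=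
  H.tr (H.a x) (H.a y) (f z u) - f (H.tr x y z) (H.a (H.a u)) - f (H.a (H.a z)) (H.tr x y u)
    + g (H.a x) (H.a y) (H.br z u) - H.br (H.a (H.a z)) (g x y u)
    - H.br (g x y z) (H.a (H.a u))

/-- Second coboundary `δ_{II}²`. -/
def d2II (H : HLY K L) (g : L → L → L → L) (x y u v w : L) : L :=
  H.tr (H.a (H.a x)) (H.a (H.a y)) (g u v w) - H.tr (g x y u) (H.a (H.a v)) (H.a (H.a w))
    - H.tr (H.a (H.a u)) (g x y v) (H.a (H.a w))
    - H.tr (H.a (H.a u)) (H.a (H.a v)) (g x y w)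
    + g (H.a (H.a x)) (H.a (H.a y)) (H.tr u v w)
    - g (H.tr x y u) (H.a (H.a v)) (H.a (H.a w))
    - g (H.a (H.a u)) (H.tr x y v) (H.a (H.a w))
    - g (H.a (H.a u)) (H.a (H.a v)) (H.tr x y w)

/-- The other second coboundary `d_I²`. -/
def c2I (H : HLY K L) (f : L → L → L) (g : L → L → L → L) (x y z : L) : L :=
  (H.br (f x y) (H.a z) + f (H.br x y) (H.a z) + g x y z)
    + (H.br (f y z) (H.a x) + f (H.br y z) (H.a x) + g y z x)
    + (H.br (f z x) (H.a y) + f (H.br z x) (H.a y) + g z x y)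

/-- The other second coboundary `d_{II}²`. -/
def c2II (H : HLY K L) (f : L → L → L) (g : L → L → L → L) (x y z u : L) : L :=
  (H.tr (f x y) (H.a z) (H.a u) + g (H.br x y) (H.a z) (H.a u))
    + (H.tr (f y z) (H.a x) (H.a u) + g (H.br y z) (H.a x) (H.a u))
    + (H.tr (f z x) (H.a y) (H.a u) + g (H.br z x) (H.a y) (H.a u))

/-- `(f,g)` is a 2-cocycle pair. -/
def IsCocycle (H : HLY K L) (f : L → L → L) (g : L → L → L → L) : Prop :=
  (∀ x y z u, d2I H f g x y z u = 0) ∧ (∀ x y u v w, d2II H g x y u v w = 0) ∧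
    (∀ x y z, c2I H f g x y z = 0) ∧ (∀ x y z u, c2II H f g x y z u = 0)

/-- `δ_I² ∘ δ¹ = 0`. -/
theorem d2I_d1_eq_zero (H : HLY K L) (f : L →ₗ[K] L)
    (hf : ∀ x, f (H.a x) = H.a (f x)) :
    ∀ x y z u,
      H.tr (H.a x) (H.a y) (d1I H f z u) - d1I H f (H.tr x y z) (H.a (H.a u))
        - d1I H f (H.a (H.a z)) (H.tr x y u) + d1II H f (H.a x) (H.a y) (H.br z u)
        - H.br (H.a (H.a z)) (d1II H f x y u) - H.br (d1II H f x y z) (H.a (H.a u)) = 0 := by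
  intro x y z u
  have hf_ax7 := congrArg f (H.ax7 x y z u)
  simp only [d1I, d1II, map_add, map_sub, LinearMap.add_apply, LinearMap.sub_apply, hf] at hf_ax7 ⊢
  linear_combination (norm := abel) H.ax7 x y z (f u) + H.ax7 x y (f z) u + H.ax7 (f x) y z u
    + H.ax7 x (f y) z u - hf_ax7
end

section
/- For a Hom-Lie-Yamaguti algebra (L, [·,·], {·,·,·}, α) and any 1-Hom-cochain f, δ_{II}²(δ_{II}¹f) = 0; explicitly, {α²(x)α²(y)δ_{II}¹f(u,v,w)} − {δ_{II}¹f(x,y,u)α²(v)α²(w)} − {α²(u)δ_{II}¹f(x,y,v)α²(w)} − {α²(u)α²(v)δ_{II}¹f(x,y,w)} + δ_{II}¹f(α²(x),α²(y),{uvw}) − δ_{II}¹f({xyu},α²(v),α²(w)) − δ_{II}¹f(α²(u),{xyv},α²(w)) − δ_{II}¹f(α²(u),α²(v),{xyw}) = 0 for all x,y,u,v,w ∈ L. -/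
variable {K L : Type*} [Field K] [AddCommGroup L] [Module K L]

namespace HLY

def fundamentalDefect (H : HLY K L) (u v x y z : L) : L :=
  H.tr (H.a (H.a u)) (H.a (H.a v)) (H.tr x y z)
    - (H.tr (H.tr u v x) (H.a (H.a y)) (H.a (H.a z))
      + H.tr (H.a (H.a x)) (H.tr u v y) (H.a (H.a z))
      + H.tr (H.a (H.a x)) (H.a (H.a y)) (H.tr u v z))

theorem fundamentalDefect_eq_zero (H : HLY K L) (u v x y z : L) :
    H.fundamentalDefect u v x y z = 0 :=
  sub_eq_zero.mpr (H.ax8 u v x y z)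

end HLY

theorem d2II_d1II_eq_fundamentalDefect (H : HLY K L) (f : L →ₗ[K] L)
    (hf : ∀ x, f (H.a x) = H.a (f x)) (x y u v w : L) :
    d2II H (d1II H f) x y u v w =
      H.fundamentalDefect (f x) y u v w + H.fundamentalDefect x (f y) u v w
        + H.fundamentalDefect x y (f u) v w + H.fundamentalDefect x y u (f v) w
        + H.fundamentalDefect x y u v (f w) - f (H.fundamentalDefect x y u v w) := by
  simp only [d2II, d1II, HLY.fundamentalDefect, map_add, map_sub, LinearMap.add_apply,
    LinearMap.sub_apply, hf]
  abel

/-- `δ_{II}²(δ_{II}¹f) = 0`. -/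
theorem d2II_d1II_eq_zero (H : HLY K L) (f : L →ₗ[K] L)
    (hf : ∀ x, f (H.a x) = H.a (f x)) :
    ∀ x y u v w,
      H.tr (H.a (H.a x)) (H.a (H.a y)) (d1II H f u v w)
        - H.tr (d1II H f x y u) (H.a (H.a v)) (H.a (H.a w))
        - H.tr (H.a (H.a u)) (d1II H f x y v) (H.a (H.a w))
        - H.tr (H.a (H.a u)) (H.a (H.a v)) (d1II H f x y w)
        + d1II H f (H.a (H.a x)) (H.a (H.a y)) (H.tr u v w)
        - d1II H f (H.tr x y u) (H.a (H.a v)) (H.a (H.a w))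
        - d1II H f (H.a (H.a u)) (H.tr x y v) (H.a (H.a w))
        - d1II H f (H.a (H.a u)) (H.a (H.a v)) (H.tr x y w) = 0 := by
  intro x y u v w
  change d2II H (d1II H f) x y u v w = 0
  simp only [d2II_d1II_eq_fundamentalDefect H f hf, HLY.fundamentalDefect_eq_zero, map_zero,
    add_zero, sub_zero]
end

section
/- For a Hom-Lie-Yamaguti algebra (L, [·,·], {·,·,·}, α) and any 1-Hom-cochain f, d_I²(δ_I¹f, δ_{II}¹f) = 0; explicitly, ↺_{x,y,z}([δ_I¹f(x,y) α(z)] + δ_I¹f([xy], α(z)) + δ_{II}¹f(x,y,z)) = 0 for all x,y,z ∈ L. -/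
variable {K L : Type*} [Field K] [AddCommGroup L] [Module K L]

namespace HLY

def jacobiator (H : HLY K L) (x y z : L) : L :=
  (H.br (H.br x y) (H.a z) + H.tr x y z) + (H.br (H.br y z) (H.a x) + H.tr y z x) +
    (H.br (H.br z x) (H.a y) + H.tr z x y)

theorem jacobiator_eq_zero (H : HLY K L) (x y z : L) : H.jacobiator x y z = 0 :=
  H.ax5 x y z

theorem c2I_d1_eq_jacobiator_sub (H : HLY K L) (f : L →ₗ[K] L)
    (hf : ∀ x, f (H.a x) = H.a (f x)) (x y z : L) :
    c2I H (d1I H f) (d1II H f) x y z =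
      H.jacobiator (f x) y z + H.jacobiator x (f y) z + H.jacobiator x y (f z) -
        f (H.jacobiator x y z) := by
  simp only [c2I, d1I, d1II, jacobiator, hf, map_add, map_sub, LinearMap.add_apply,
    LinearMap.sub_apply]
  abel

end HLY

/-- `d_I²(δ_I¹f, δ_{II}¹f) = 0`. -/
theorem c2I_d1_eq_zero (H : HLY K L) (f : L →ₗ[K] L)
    (hf : ∀ x, f (H.a x) = H.a (f x)) :
    ∀ x y z,
      (H.br (d1I H f x y) (H.a z) + d1I H f (H.br x y) (H.a z) + d1II H f x y z)
        + (H.br (d1I H f y z) (H.a x) + d1I H f (H.br y z) (H.a x) + d1II H f y z x)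
        + (H.br (d1I H f z x) (H.a y) + d1I H f (H.br z x) (H.a y) + d1II H f z x y) = 0 := by
  intro x y z
  have h := H.c2I_d1_eq_jacobiator_sub f hf x y z
  simp only [HLY.jacobiator_eq_zero, map_zero, add_zero, sub_zero] at h
  exact h
end

section
/- For a Hom-Lie-Yamaguti algebra (L, [·,·], {·,·,·}, α) and any 1-Hom-cochain f, d_{II}²(δ_I¹f, δ_{II}¹f) = 0; explicitly, ↺_{x,y,z}({δ_I¹f(x,y) α(z) α(u)} + δ_{II}¹f([xy], α(z), α(u))) = 0 for all x,y,z,u ∈ L. -/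
variable {K L : Type*} [Field K] [AddCommGroup L] [Module K L]

/- Expanding the coboundaries, the cyclic sum becomes the Leibniz defect of `f` against the
4-linear map `(x, y, z, u) ↦ ↺ {[xy] α(z) α(u)}`: one copy of axiom (6) with `f` applied to each
argument in turn, minus `f` of axiom (6) itself. The `f([xy])` terms cancel between `δ_I¹f` and
`δ_{II}¹f`, and `f ∘ α = α ∘ f` moves `f` inside the `α`'s. -/

theorem HLY.tr_d1I_add_d1II (H : HLY K L) (f : L →ₗ[K] L)
    (hf : ∀ x, f (H.a x) = H.a (f x)) (x y z u : L) :
    H.tr (d1I H f x y) (H.a z) (H.a u) + d1II H f (H.br x y) (H.a z) (H.a u) =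
      H.tr (H.br x (f y)) (H.a z) (H.a u) + H.tr (H.br (f x) y) (H.a z) (H.a u)
        + H.tr (H.br x y) (H.a (f z)) (H.a u) + H.tr (H.br x y) (H.a z) (H.a (f u))
        - f (H.tr (H.br x y) (H.a z) (H.a u)) := by
  simp only [d1I, d1II, hf, map_add, map_sub, LinearMap.add_apply, LinearMap.sub_apply]
  abel

/-- `d_{II}²(δ_I¹f, δ_{II}¹f) = 0`. -/
theorem c2II_d1_eq_zero (H : HLY K L) (f : L →ₗ[K] L)
    (hf : ∀ x, f (H.a x) = H.a (f x)) :
    ∀ x y z u,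
      (H.tr (d1I H f x y) (H.a z) (H.a u) + d1II H f (H.br x y) (H.a z) (H.a u))
        + (H.tr (d1I H f y z) (H.a x) (H.a u) + d1II H f (H.br y z) (H.a x) (H.a u))
        + (H.tr (d1I H f z x) (H.a y) (H.a u) + d1II H f (H.br z x) (H.a y) (H.a u)) = 0 := by
  intro x y z u
  have hf_ax6 : f (H.tr (H.br x y) (H.a z) (H.a u) + H.tr (H.br y z) (H.a x) (H.a u)
      + H.tr (H.br z x) (H.a y) (H.a u)) = 0 := by
    rw [H.ax6, map_zero]
  simp only [H.tr_d1I_add_d1II f hf, map_add] at hf_ax6 ⊢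
  linear_combination (norm := abel)
    H.ax6 (f x) y z u + H.ax6 x (f y) z u + H.ax6 x y (f z) u + H.ax6 x y z (f u) - hf_ax6
end

section
/- Let (f_t, g_t) with f_t = [·,·] + Σ_{i≥1} f_i t^i and g_t = {·,·,·} + Σ_{i≥1} g_i t^i be a one-parameter formal deformation of a Hom-Lie-Yamaguti algebra (L, [·,·], {·,·,·}, α). Then the infinitesimal (f₁, g₁) is a 2-cocycle: (δ_I², δ_{II}²)(f₁, g₁) = (0,0) and (d_I², d_{II}²)(f₁, g₁) = (0,0). -/
variable {K L : Type*} [Field K] [AddCommGroup L] [Module K L]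

/-- A one-parameter formal deformation of the Hom-Lie-Yamaguti algebra `H`,
given by its coefficient maps: `f_t = Σ fᵢ tⁱ`, `g_t = Σ gᵢ tⁱ` with
`f₀ = [·,·]`, `g₀ = {·,·,·}`, subject to the deformation equations
(1')-(8'), which are equivalent to `(L[[t]], f_t, g_t, α)` being a
Hom-Lie-Yamaguti algebra over `K[[t]]`. -/
structure Deform (H : HLY K L) where
  f : ℕ → L →ₗ[K] L →ₗ[K] L
  g : ℕ → L →ₗ[K] L →ₗ[K] L →ₗ[K] L
  f0 : f 0 = H.br
  g0 : g 0 = H.tr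
  fa : ∀ n x y, f n (H.a x) (H.a y) = H.a (f n x y)
  ga : ∀ n x y z, g n (H.a x) (H.a y) (H.a z) = H.a (g n x y z)
  falt : ∀ n x, f n x x = 0
  galt : ∀ n x y, g n x x y = 0
  eq5 : ∀ n, ∀ x y z : L,
    (∑ p ∈ Finset.HasAntidiagonal.antidiagonal n,
      (f p.1 (f p.2 x y) (H.a z) + f p.1 (f p.2 y z) (H.a x) + f p.1 (f p.2 z x) (H.a y)))
      + (g n x y z + g n y z x + g n z x y) = 0
  eq6 : ∀ n, ∀ x y z u : L,
    ∑ p ∈ Finset.HasAntidiagonal.antidiagonal n,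
      (g p.1 (f p.2 x y) (H.a z) (H.a u) + g p.1 (f p.2 y z) (H.a x) (H.a u)
        + g p.1 (f p.2 z x) (H.a y) (H.a u)) = 0
  eq7 : ∀ n, ∀ x y z u : L,
    ∑ p ∈ Finset.HasAntidiagonal.antidiagonal n, g p.1 (H.a x) (H.a y) (f p.2 z u) =
      ∑ p ∈ Finset.HasAntidiagonal.antidiagonal n,
        (f p.1 (g p.2 x y z) (H.a (H.a u)) + f p.1 (H.a (H.a z)) (g p.2 x y u))
  eq8 : ∀ n, ∀ u v x y z : L,
    ∑ p ∈ Finset.HasAntidiagonal.antidiagonal n, g p.1 (H.a (H.a u)) (H.a (H.a v)) (g p.2 x y z) =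
      ∑ p ∈ Finset.HasAntidiagonal.antidiagonal n,
        (g p.1 (g p.2 u v x) (H.a (H.a y)) (H.a (H.a z))
          + g p.1 (H.a (H.a x)) (g p.2 u v y) (H.a (H.a z))
          + g p.1 (H.a (H.a x)) (H.a (H.a y)) (g p.2 u v z))


/-- An equivalence `Φ_t = Σ φᵢ tⁱ` of one-parameter formal deformations,
from `(D.f_t, D.g_t)` to `(D'.f_t, D'.g_t)`:  `φ₀ = id`, `Φ_t ∘ α = α ∘ Φ_t`,
`Φ_t(f_t(x,y)) = f_t'(Φ_t x, Φ_t y)` and `Φ_t(g_t(x,y,z)) = g_t'(Φ_t x, Φ_t y, Φ_t z)`,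
written out coefficientwise. -/
structure DefEquiv (H : HLY K L) (D D' : Deform H) where
  Φ : ℕ → L →ₗ[K] L
  Φ0 : Φ 0 = LinearMap.id
  Φa : ∀ n x, Φ n (H.a x) = H.a (Φ n x)
  hf : ∀ n, ∀ x y : L,
    ∑ p ∈ Finset.HasAntidiagonal.antidiagonal n, Φ p.1 (D.f p.2 x y) =
      ∑ p ∈ Finset.HasAntidiagonal.antidiagonal n, ∑ q ∈ Finset.HasAntidiagonal.antidiagonal p.2,
        D'.f p.1 (Φ q.1 x) (Φ q.2 y)
  hg : ∀ n, ∀ x y z : L,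
    ∑ p ∈ Finset.HasAntidiagonal.antidiagonal n, Φ p.1 (D.g p.2 x y z) =
      ∑ p ∈ Finset.HasAntidiagonal.antidiagonal n, ∑ q ∈ Finset.HasAntidiagonal.antidiagonal p.2, ∑ r ∈ Finset.HasAntidiagonal.antidiagonal q.2,
        D'.g p.1 (Φ q.1 x) (Φ r.1 y) (Φ r.2 z)

/-!
The coefficient of `t` in each deformation equation only involves the index pairs `(0, 1)` and
`(1, 0)`, where `f₀ = [·,·]` and `g₀ = {·,·,·}`; so it is linear in `(f₁, g₁)` and is, up to
rearrangement, one of the four cocycle equations: (7') gives `δ_I²`, (8') gives `δ_{II}²`,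
(5') gives `d_I²` and (6') gives `d_{II}²`.
-/

open Finset in
theorem Finset.Nat.sum_antidiagonal_one {M : Type*} [AddCommMonoid M] (f : ℕ × ℕ → M) :
    ∑ p ∈ antidiagonal 1, f p = f (0, 1) + f (1, 0) := by
  rw [Nat.sum_antidiagonal_succ, Nat.antidiagonal_zero, sum_singleton]

namespace Deform

variable {H : HLY K L} (D : Deform H)

theorem d2I_infinitesimal_eq_zero (x y z u : L) :
    d2I H (fun x y => D.f 1 x y) (fun x y z => D.g 1 x y z) x y z u = 0 := by
  have h := D.eq7 1 x y z u
  simp only [Finset.Nat.sum_antidiagonal_one, D.f0, D.g0] at h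
  rw [d2I]
  linear_combination (norm := module) h

theorem d2II_infinitesimal_eq_zero (x y u v w : L) :
    d2II H (fun x y z => D.g 1 x y z) x y u v w = 0 := by
  have h := D.eq8 1 x y u v w
  simp only [Finset.Nat.sum_antidiagonal_one, D.g0] at h
  rw [d2II]
  linear_combination (norm := module) h

theorem c2I_infinitesimal_eq_zero (x y z : L) :
    c2I H (fun x y => D.f 1 x y) (fun x y z => D.g 1 x y z) x y z = 0 := by
  have h := D.eq5 1 x y z
  simp only [Finset.Nat.sum_antidiagonal_one, D.f0] at h
  rw [c2I]
  linear_combination (norm := module) h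

theorem c2II_infinitesimal_eq_zero (x y z u : L) :
    c2II H (fun x y => D.f 1 x y) (fun x y z => D.g 1 x y z) x y z u = 0 := by
  have h := D.eq6 1 x y z u
  simp only [Finset.Nat.sum_antidiagonal_one, D.f0, D.g0] at h
  rw [c2II]
  linear_combination (norm := module) h

end Deform

/-- The infinitesimal `(f₁, g₁)` of a one-parameter formal deformation is a
2-cocycle. -/
theorem infinitesimal_isCocycle (H : HLY K L) (D : Deform H) :
    IsCocycle H (fun x y => D.f 1 x y) (fun x y z => D.g 1 x y z) :=
  ⟨D.d2I_infinitesimal_eq_zero, D.d2II_infinitesimal_eq_zero, D.c2I_infinitesimal_eq_zero,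
    D.c2II_infinitesimal_eq_zero⟩
end

section
/- If (f_t, g_t) and (f_t', g_t') are equivalent one-parameter formal deformations of a Hom-Lie-Yamaguti algebra (L, [·,·], {·,·,·}, α), then their infinitesimals differ by a coboundary: (f₁ − f₁', g₁ − g₁') = (δ_I¹φ₁, δ_{II}¹φ₁) for some 1-Hom-cochain φ₁; hence (f₁, g₁) and (f₁', g₁') belong to the same cohomology class in HomH²(L,L) × HomH³(L,L). -/
variable {K L : Type*} [Field K] [AddCommGroup L] [Module K L]

/-! The coefficient of `t¹` in `Φ_t ∘ f_t = f_t' ∘ (Φ_t × Φ_t)` reads, since `φ₀ = id` and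
`f₀ = f₀' = [·,·]`, as `f₁ + φ₁ ∘ [·,·] = [· , φ₁ ·] + [φ₁ ·, ·] + f₁'`, i.e. `f₁ − f₁' = δ_I¹φ₁`;
likewise for `g`. The cochain `φ₁` commutes with `α` because `Φ_t` does. -/

namespace DefEquiv

variable {H : HLY K L} {D D' : Deform H} (E : DefEquiv H D D')

theorem f_one_sub_f_one_eq_d1I (x y : L) :
    D.f 1 x y - D'.f 1 x y = d1I H (E.Φ 1) x y := by
  have h := E.hf 1 x y
  simp only [Finset.Nat.sum_antidiagonal_succ, Finset.Nat.antidiagonal_zero, Finset.sum_singleton,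
    E.Φ0, D.f0, D'.f0, LinearMap.id_apply, zero_add] at h
  rw [d1I, sub_eq_sub_iff_add_eq_add]
  exact h

theorem g_one_sub_g_one_eq_d1II (x y z : L) :
    D.g 1 x y z - D'.g 1 x y z = d1II H (E.Φ 1) x y z := by
  have h := E.hg 1 x y z
  simp only [Finset.Nat.sum_antidiagonal_succ, Finset.Nat.antidiagonal_zero, Finset.sum_singleton,
    E.Φ0, D.g0, D'.g0, LinearMap.id_apply, zero_add] at h
  rw [d1II, sub_eq_sub_iff_add_eq_add, h]
  abel

end DefEquiv

/-- The infinitesimals of equivalent deformations differ by the coboundary of a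
1-Hom-cochain, hence give the same class in `HomH² × HomH³`. -/
theorem equivalent_infinitesimals_cohomologous (H : HLY K L)
    (D D' : Deform H) (E : DefEquiv H D D') :
    ∃ φ : L →ₗ[K] L, (∀ x, φ (H.a x) = H.a (φ x)) ∧
      (∀ x y, D.f 1 x y - D'.f 1 x y = d1I H φ x y) ∧
      (∀ x y z, D.g 1 x y z - D'.g 1 x y z = d1II H φ x y z) :=
  ⟨E.Φ 1, E.Φa 1, E.f_one_sub_f_one_eq_d1I, E.g_one_sub_g_one_eq_d1II⟩
end

section
/- For a Hom-Lie-Yamaguti algebra (L, [·,·], {·,·,·}, α) and any pair (f, g) of a 2-Hom-cochain and a 3-Hom-cochain, the composition of coboundary operators vanishes: δ_I³(δ_I²f) = 0 and δ_{II}³(δ_{II}²g) = 0. -/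
variable {K L : Type*} [Field K] [AddCommGroup L] [Module K L]

/-- `α²`. -/
def a2 (H : HLY K L) (x : L) : L := H.a (H.a x)
/-- `α³`. -/
def a3 (H : HLY K L) (x : L) : L := H.a (H.a (H.a x))
/-- `α⁴`. -/
def a4 (H : HLY K L) (x : L) : L := H.a (H.a (H.a (H.a x)))

/-- Third coboundary `δ_I³` (on a pair of a 4-cochain `f` and a 5-cochain `g`). -/
def d3I (H : HLY K L) (f : L → L → L → L → L) (g : L → L → L → L → L → L)
    (x1 x2 x3 x4 x5 x6 : L) : L :=
  H.tr (a3 H x1) (a3 H x2) (f x3 x4 x5 x6) - H.tr (a3 H x3) (a3 H x4) (f x1 x2 x5 x6)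
    - f (H.tr x1 x2 x3) (a2 H x4) (a2 H x5) (a2 H x6)
    - f (a2 H x3) (H.tr x1 x2 x4) (a2 H x5) (a2 H x6)
    - f (a2 H x3) (a2 H x4) (H.tr x1 x2 x5) (a2 H x6)
    - f (a2 H x3) (a2 H x4) (a2 H x5) (H.tr x1 x2 x6)
    + f (a2 H x1) (a2 H x2) (H.tr x3 x4 x5) (a2 H x6)
    + f (a2 H x1) (a2 H x2) (a2 H x5) (H.tr x3 x4 x6)
    - g (H.a x1) (H.a x2) (H.a x3) (H.a x4) (H.br x5 x6)
    + H.br (a4 H x5) (g x1 x2 x3 x4 x6) + H.br (g x1 x2 x3 x4 x5) (a4 H x6)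

/-- Third coboundary `δ_{II}³` (on a 5-cochain `g`). -/
def d3II (H : HLY K L) (g : L → L → L → L → L → L)
    (x1 x2 x3 x4 x5 x6 x7 : L) : L :=
  H.tr (a4 H x1) (a4 H x2) (g x3 x4 x5 x6 x7)
    - H.tr (a4 H x3) (a4 H x4) (g x1 x2 x5 x6 x7)
    + H.tr (a4 H x5) (a4 H x6) (g x1 x2 x3 x4 x7)
    - g (H.tr x1 x2 x3) (a2 H x4) (a2 H x5) (a2 H x6) (a2 H x7)
    - g (a2 H x3) (H.tr x1 x2 x4) (a2 H x5) (a2 H x6) (a2 H x7)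
    - g (a2 H x3) (a2 H x4) (H.tr x1 x2 x5) (a2 H x6) (a2 H x7)
    - g (a2 H x3) (a2 H x4) (a2 H x5) (H.tr x1 x2 x6) (a2 H x7)
    - g (a2 H x3) (a2 H x4) (a2 H x5) (a2 H x6) (H.tr x1 x2 x7)
    + g (a2 H x1) (a2 H x2) (H.tr x3 x4 x5) (a2 H x6) (a2 H x7)
    + g (a2 H x1) (a2 H x2) (a2 H x5) (H.tr x3 x4 x6) (a2 H x7)
    + g (a2 H x1) (a2 H x2) (a2 H x5) (a2 H x6) (H.tr x3 x4 x7)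
    - g (a2 H x1) (a2 H x2) (a2 H x3) (a2 H x4) (H.tr x5 x6 x7)
    + H.tr (g x1 x2 x3 x4 x5) (a4 H x6) (a4 H x7)
    - H.tr (g x1 x2 x3 x4 x6) (a4 H x5) (a4 H x7)

namespace HLY

variable (H : HLY K L)

theorem tr_swap (x y z : L) : H.tr x y z = -H.tr y x z := by
  have h := H.tr_alt (x + y) z
  simp only [map_add, LinearMap.add_apply, H.tr_alt, zero_add, add_zero] at h
  exact eq_neg_of_add_eq_zero_right h

theorem d3I_add (F₁ F₂ : L → L → L → L → L) (G₁ G₂ : L → L → L → L → L → L)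
    (x1 x2 x3 x4 x5 x6 : L) :
    d3I H (F₁ + F₂) (G₁ + G₂) x1 x2 x3 x4 x5 x6 =
      d3I H F₁ G₁ x1 x2 x3 x4 x5 x6 + d3I H F₂ G₂ x1 x2 x3 x4 x5 x6 := by
  simp only [d3I, Pi.add_apply, map_add, LinearMap.add_apply]
  module

theorem d2I_add (f₁ f₂ : L → L → L) (g₁ g₂ : L → L → L → L) :
    d2I H (f₁ + f₂) (g₁ + g₂) = d2I H f₁ g₁ + d2I H f₂ g₂ := by
  funext x y z u
  simp only [d2I, Pi.add_apply, map_add, LinearMap.add_apply]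
  module

theorem d3I_d2I_fst_eq_zero (f : L →ₗ[K] L →ₗ[K] L)
    (hfa : ∀ x y, f (H.a x) (H.a y) = H.a (f x y)) (x1 x2 x3 x4 x5 x6 : L) :
    d3I H (d2I H (fun x y => f x y) 0) 0 x1 x2 x3 x4 x5 x6 = 0 := by
  linear_combination (norm := skip)
    H.ax8 (H.a x1) (H.a x2) (H.a x3) (H.a x4) (f x5 x6)
      - congrArg (f · (a4 H x6)) (H.ax8 x1 x2 x3 x4 x5)
      - congrArg (f (a4 H x5)) (H.ax8 x1 x2 x3 x4 x6)
  simp only [d3I, d2I, a2, a3, a4, Pi.zero_apply, map_add, map_sub, map_zero,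
    LinearMap.add_apply, LinearMap.zero_apply, H.a_tr, ← hfa]
  abel

theorem d3I_d2I_snd_eq_zero (g : L →ₗ[K] L →ₗ[K] L →ₗ[K] L)
    (hga : ∀ x y z, g (H.a x) (H.a y) (H.a z) = H.a (g x y z)) (x1 x2 x3 x4 x5 x6 : L) :
    d3I H (d2I H 0 (fun x y z => g x y z)) (d2II H (fun x y z => g x y z)) x1 x2 x3 x4 x5 x6 = 0 := by
  linear_combination (norm := skip)
    H.ax7 (g x1 x2 x3) (a2 H x4) (a2 H x5) (a2 H x6)
      + H.ax7 (a2 H x3) (g x1 x2 x4) (a2 H x5) (a2 H x6)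
      - H.ax7 (a2 H x1) (a2 H x2) (a2 H x5) (g x3 x4 x6)
      - H.ax7 (a2 H x1) (a2 H x2) (g x3 x4 x5) (a2 H x6)
      + H.ax7 (a2 H x3) (a2 H x4) (a2 H x5) (g x1 x2 x6)
      + H.ax7 (a2 H x3) (a2 H x4) (g x1 x2 x5) (a2 H x6)
      - congrArg (g (a3 H x1) (a3 H x2)) (H.ax7 x3 x4 x5 x6)
      + congrArg (g (a3 H x3) (a3 H x4)) (H.ax7 x1 x2 x5 x6)
  simp only [d3I, d2I, d2II, a2, a3, a4, Pi.zero_apply, map_add, map_sub, map_zero,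
    LinearMap.add_apply, LinearMap.sub_apply, H.a_br, H.a_tr, ← hga]
  abel

theorem d3II_d2II_eq_zero (g : L →ₗ[K] L →ₗ[K] L →ₗ[K] L)
    (hga : ∀ x y z, g (H.a x) (H.a y) (H.a z) = H.a (g x y z)) (x1 x2 x3 x4 x5 x6 x7 : L) :
    d3II H (d2II H (fun x y z => g x y z)) x1 x2 x3 x4 x5 x6 x7 = 0 := by
  linear_combination (norm := skip)
    H.ax8 (a2 H x1) (a2 H x2) (a2 H x3) (a2 H x4) (g x5 x6 x7)
      - H.ax8 (a2 H x1) (a2 H x2) (a2 H x5) (g x3 x4 x6) (a2 H x7)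
      - H.ax8 (a2 H x1) (a2 H x2) (a2 H x5) (a2 H x6) (g x3 x4 x7)
      - H.ax8 (a2 H x1) (a2 H x2) (g x3 x4 x5) (a2 H x6) (a2 H x7)
      + H.ax8 (a2 H x3) (a2 H x4) (a2 H x5) (g x1 x2 x6) (a2 H x7)
      + H.ax8 (a2 H x3) (a2 H x4) (a2 H x5) (a2 H x6) (g x1 x2 x7)
      + H.ax8 (a2 H x3) (a2 H x4) (g x1 x2 x5) (a2 H x6) (a2 H x7)
      + H.ax8 (g x1 x2 x3) (a2 H x4) (a2 H x5) (a2 H x6) (a2 H x7)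
      + H.ax8 (a2 H x3) (g x1 x2 x4) (a2 H x5) (a2 H x6) (a2 H x7)
      - congrArg (g · (a4 H x6) (a4 H x7)) (H.ax8 x1 x2 x3 x4 x5)
      - congrArg (g (a4 H x5) · (a4 H x7)) (H.ax8 x1 x2 x3 x4 x6)
      - congrArg (g (a4 H x5) (a4 H x6)) (H.ax8 x1 x2 x3 x4 x7)
      + congrArg (g (a4 H x3) (a4 H x4)) (H.ax8 x1 x2 x5 x6 x7)
      - congrArg (g (a4 H x1) (a4 H x2)) (H.ax8 x3 x4 x5 x6 x7)
      - H.tr_swap (d2II H (fun x y z => g x y z) x1 x2 x3 x4 x6) (a4 H x5) (a4 H x7)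
  simp only [d3II, d2II, a2, a4, map_add, map_sub, LinearMap.add_apply, LinearMap.sub_apply,
    H.a_tr, ← hga]
  abel

end HLY

theorem d3_d2_eq_zero_general (H : HLY K L)
    (f : L →ₗ[K] L →ₗ[K] L) (g : L →ₗ[K] L →ₗ[K] L →ₗ[K] L)
    (hfa : ∀ x y, f (H.a x) (H.a y) = H.a (f x y))
    (hga : ∀ x y z, g (H.a x) (H.a y) (H.a z) = H.a (g x y z)) :
    (∀ x1 x2 x3 x4 x5 x6,
      d3I H (d2I H (fun x y => f x y) (fun x y z => g x y z))
        (d2II H (fun x y z => g x y z)) x1 x2 x3 x4 x5 x6 = 0) ∧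
    (∀ x1 x2 x3 x4 x5 x6 x7,
      d3II H (d2II H (fun x y z => g x y z)) x1 x2 x3 x4 x5 x6 x7 = 0) := by
  refine ⟨fun x1 x2 x3 x4 x5 x6 => ?_, H.d3II_d2II_eq_zero g hga⟩
  have hsplit : d2I H (fun x y => f x y) (fun x y z => g x y z) =
      d2I H (fun x y => f x y) 0 + d2I H 0 (fun x y z => g x y z) := by
    rw [← H.d2I_add, add_zero, zero_add]
  rw [hsplit, ← zero_add (d2II H _), H.d3I_add, H.d3I_d2I_fst_eq_zero f hfa,
    H.d3I_d2I_snd_eq_zero g hga, add_zero]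

/-- `(δ_I³, δ_{II}³) ∘ (δ_I², δ_{II}²) = 0`. -/
theorem d3_d2_eq_zero (H : HLY K L)
    (f : L →ₗ[K] L →ₗ[K] L) (g : L →ₗ[K] L →ₗ[K] L →ₗ[K] L)
    (hf0 : ∀ x, f x x = 0) (hfa : ∀ x y, f (H.a x) (H.a y) = H.a (f x y))
    (hg0 : ∀ x y, g x x y = 0)
    (hga : ∀ x y z, g (H.a x) (H.a y) (H.a z) = H.a (g x y z)) :
    (∀ x1 x2 x3 x4 x5 x6,
      d3I H (d2I H (fun x y => f x y) (fun x y z => g x y z))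
        (d2II H (fun x y z => g x y z)) x1 x2 x3 x4 x5 x6 = 0) ∧
    (∀ x1 x2 x3 x4 x5 x6 x7,
      d3II H (d2II H (fun x y z => g x y z)) x1 x2 x3 x4 x5 x6 x7 = 0) :=
  d3_d2_eq_zero_general H f g hfa hga
end
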